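/- In the election constructed in the reduction for Schulze voter control —whose weighted majority graph has candidates B = {b_1,…,b_{3s}} ∪ {p,w} with D(p,w) = 2L, D(b_j,p) = 2L + 4s − 2 for each j, D(w,b_j) ≫ 2L, and all other margins 0 (where L ≫ s)— the candidate w is the unique Schulze winner. -/

import Mathlib

/-- A vote: a strict linear order on candidates, encoded by an injective ranking
(smaller rank = more preferred). -/
structure Vote (C : Type*) where
  rk : C → ℕ
  inj : Function.Injective rk

namespace Vote

/-- `v.Prefers c d` means the voter ranks `c` strictly above `d`. -/
def Prefers {C : Type*} (v : Vote C) (c d : C) : Prop := v.rk c < v.rk d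

instance {C : Type*} (v : Vote C) : DecidableRel v.Prefers :=
  fun c d => inferInstanceAs (Decidable (v.rk c < v.rk d))

end Vote

/-- `Ncount V c d`: the number of votes in `V` ranking `c` above `d`. -/
def Ncount {C : Type*} (V : List (Vote C)) (c d : C) : ℕ :=
  V.countP (fun v => decide (v.Prefers c d))

/-- The pairwise margin `D(c,d) = N(c,d) - N(d,c)`. -/
def margin {C : Type*} (V : List (Vote C)) (c d : C) : ℤ :=
  (Ncount V c d : ℤ) - (Ncount V d c : ℤ)

/-- `l` is a directed path from `c` to `d` using only vertices in `A`
(a list of at least two vertices starting at `c` and ending at `d`). -/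
def IsPathOn {C : Type*} (A : Set C) (c d : C) (l : List C) : Prop :=
  2 ≤ l.length ∧ l.head? = some c ∧ l.getLast? = some d ∧ ∀ x ∈ l, x ∈ A

/-- The strength of a path: the minimum margin along its consecutive edges. -/
def pathStrength {C : Type*} (D : C → C → ℤ) (l : List C) : ℤ :=
  (((l.zip l.tail).map fun p => D p.1 p.2).min?).getD 0

/-- The set of strengths of paths from `c` to `d` within `A`. -/
def strengths {C : Type*} (A : Set C) (D : C → C → ℤ) (c d : C) : Set ℤ :=
  {s | ∃ l : List C, IsPathOn A c d l ∧ pathStrength D l = s}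

/-- `P(c,d)`: the strength of a strongest path from `c` to `d` within `A`. -/
noncomputable def strongestPath {C : Type*} (A : Set C) (D : C → C → ℤ) (c d : C) : ℤ :=
  sSup (strengths A D c d)

/-- `c` is a Schulze winner among candidates `A` w.r.t. margins `D`. -/
def SchulzeWinnerOn {C : Type*} (A : Set C) (D : C → C → ℤ) (c : C) : Prop :=
  c ∈ A ∧ ∀ d ∈ A, d ≠ c → strongestPath A D d c ≤ strongestPath A D c d

/-- `c` is a Condorcet winner among candidates `A` for the votes `V`. -/
def CondorcetWinnerOn {C : Type*} (A : Set C) (V : List (Vote C)) (c : C) : Prop :=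
  c ∈ A ∧ ∀ d ∈ A, d ≠ c → 0 < margin V c d

/-! Every path into `w` ends with an edge of margin at most `D(p,w) = 2L`, so `P(d,w) ≤ 2L` for
all `d`. Conversely `w` reaches each `b ∈ B` directly with strength `10L`, and reaches `p` through
any `b` with strength `min(10L, 2L + 4s - 2) > 2L`. So `P(w,d) > P(d,w)` for every `d ≠ w`, which
makes `w` a Schulze winner and rules out every other candidate. -/

section StrongestPath

variable {C : Type*} {A : Set C} {D : C → C → ℤ} {c d : C} {l : List C}

lemma pathStrength_le_of_mem_zip_tail {x y : C} (h : (x, y) ∈ l.zip l.tail) :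
    pathStrength D l ≤ D x y := by
  have hmem : D x y ∈ (l.zip l.tail).map fun e => D e.1 e.2 := List.mem_map.2 ⟨(x, y), h, rfl⟩
  obtain ⟨m, hm⟩ := Option.isSome_iff_exists.1 (List.isSome_min?_of_mem hmem)
  rw [pathStrength, hm, Option.getD_some]
  exact (List.le_min?_iff hm).1 le_rfl _ hmem

@[simp]
lemma pathStrength_pair (a b : C) : pathStrength D [a, b] = D a b := by
  simp [pathStrength]

@[simp]
lemma pathStrength_triple (a b e : C) : pathStrength D [a, b, e] = min (D a b) (D b e) := by
  simp [pathStrength, List.min?_cons]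

lemma List.exists_mem_zip_tail_of_getLast? :
    ∀ {l : List C}, 2 ≤ l.length → l.getLast? = some d → ∃ x, (x, d) ∈ l.zip l.tail
  | [], h, _ | [_], h, _ => by simp at h
  | [a, b], _, hlast => ⟨a, by simp_all⟩
  | _ :: b :: e :: t, _, hlast => by
    rw [List.getLast?_cons_cons] at hlast
    obtain ⟨x, hx⟩ := List.exists_mem_zip_tail_of_getLast? (l := b :: e :: t) (by simp) hlast
    exact ⟨x, List.mem_cons_of_mem _ hx⟩

lemma IsPathOn.exists_last_edge (hl : IsPathOn A c d l) :
    ∃ x ∈ A, (x, d) ∈ l.zip l.tail := by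
  obtain ⟨x, hx⟩ := List.exists_mem_zip_tail_of_getLast? hl.1 hl.2.2.1
  exact ⟨x, hl.2.2.2 x (List.of_mem_zip hx).1, hx⟩

lemma isPathOn_pair (hc : c ∈ A) (hd : d ∈ A) : IsPathOn A c d [c, d] :=
  ⟨le_rfl, rfl, rfl, by simp [hc, hd]⟩

lemma isPathOn_triple {b : C} (hc : c ∈ A) (hb : b ∈ A) (hd : d ∈ A) :
    IsPathOn A c d [c, b, d] :=
  ⟨by simp, rfl, rfl, by simp [hc, hb, hd]⟩

lemma bddAbove_strengths [Finite C] : BddAbove (strengths A D c d) := by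
  obtain ⟨M, hM⟩ := (Set.finite_range fun e : C × C => D e.1 e.2).bddAbove
  refine ⟨M, ?_⟩
  rintro _ ⟨l, hl, rfl⟩
  obtain ⟨x, -, hx⟩ := hl.exists_last_edge
  exact (pathStrength_le_of_mem_zip_tail hx).trans (hM ⟨(x, d), rfl⟩)

lemma pathStrength_le_strongestPath [Finite C] (hl : IsPathOn A c d l) :
    pathStrength D l ≤ strongestPath A D c d :=
  le_csSup bddAbove_strengths ⟨l, hl, rfl⟩

lemma strongestPath_le_of_forall_le {M : ℤ} (hc : c ∈ A) (hd : d ∈ A)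
    (hM : ∀ x ∈ A, D x d ≤ M) : strongestPath A D c d ≤ M := by
  refine csSup_le ⟨_, [c, d], isPathOn_pair hc hd, rfl⟩ ?_
  rintro _ ⟨l, hl, rfl⟩
  obtain ⟨x, hxA, hx⟩ := hl.exists_last_edge
  exact (pathStrength_le_of_mem_zip_tail hx).trans (hM x hxA)

lemma schulzeWinnerOn_and_unique_of_forall_lt (hc : c ∈ A)
    (h : ∀ d ∈ A, d ≠ c → strongestPath A D d c < strongestPath A D c d) :
    SchulzeWinnerOn A D c ∧ ∀ e, SchulzeWinnerOn A D e → e = c := by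
  refine ⟨⟨hc, fun d hd hdc => (h d hd hdc).le⟩, fun e he => ?_⟩
  by_contra hec
  exact (he.2 c hc (Ne.symm hec)).not_gt (h e he.1 hec)

end StrongestPath

theorem w_unique_schulze_winner_general {C : Type*} [Fintype C]
    (p w : C) (s L : ℕ) (hs : 1 ≤ s) (hL : 4 * s < L)
    (hcard : Fintype.card C = 3 * s + 2)
    (D : C → C → ℤ)
    (hskew : ∀ a b : C, D a b = - D b a)
    (hpwD : D p w = 2 * (L : ℤ))
    (hbp : ∀ b : C, b ≠ p → b ≠ w → D b p = 2 * (L : ℤ) + 4 * (s : ℤ) - 2)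
    (hwb : ∀ b : C, b ≠ p → b ≠ w → D w b = 10 * (L : ℤ)) :
    SchulzeWinnerOn Set.univ D w ∧
      ∀ c : C, SchulzeWinnerOn Set.univ D c → c = w := by
  have hinto_w : ∀ x ∈ Set.univ, D x w ≤ 2 * (L : ℤ) := by
    intro x _
    by_cases hxp : x = p
    · exact hxp ▸ hpwD.le
    by_cases hxw : x = w
    · subst hxw; linarith [hskew x x]
    · linarith [hskew x w, hwb x hxp hxw]
  have hthree : 3 ≤ ENat.card C := by
    rw [ENat.card_eq_coe_fintype_card, hcard]; norm_cast; omega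
  obtain ⟨b, hbp', hbw'⟩ := ENat.exists_ne_ne_of_three_le hthree p w
  refine schulzeWinnerOn_and_unique_of_forall_lt (Set.mem_univ w) fun d _ hdw =>
    (strongestPath_le_of_forall_le (Set.mem_univ d) (Set.mem_univ w) hinto_w).trans_lt ?_
  by_cases hdp : d = p
  · subst hdp
    calc 2 * (L : ℤ) < min (D w b) (D b d) := by rw [hwb b hbp' hbw', hbp b hbp' hbw']; omega
      _ = pathStrength D [w, b, d] := (pathStrength_triple w b d).symm
      _ ≤ _ := pathStrength_le_strongestPath <|
          isPathOn_triple (Set.mem_univ _) (Set.mem_univ _) (Set.mem_univ _)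
  · calc 2 * (L : ℤ) < D w d := by rw [hwb d hdp hdw]; omega
      _ = pathStrength D [w, d] := (pathStrength_pair w d).symm
      _ ≤ _ := pathStrength_le_strongestPath (isPathOn_pair (Set.mem_univ _) (Set.mem_univ _))

/-- In the weighted majority graph of the voter-control reduction — candidates
`B ∪ {p, w}` with `|B| = 3s`, margins `D(p,w) = 2L`, `D(b,p) = 2L + 4s - 2` and
`D(w,b) = 10L` for every `b ∈ B`, all other margins `0` (skew-symmetric), `s ≥ 1`,
`L > 4s` — candidate `w` is the unique Schulze winner. -/
theorem w_unique_schulze_winner {C : Type*} [Fintype C] [DecidableEq C]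
    (p w : C) (hpw : p ≠ w) (s L : ℕ) (hs : 1 ≤ s) (hL : 4 * s < L)
    (hcard : Fintype.card C = 3 * s + 2)
    (D : C → C → ℤ)
    (hskew : ∀ a b : C, D a b = - D b a)
    (hpwD : D p w = 2 * (L : ℤ))
    (hbp : ∀ b : C, b ≠ p → b ≠ w → D b p = 2 * (L : ℤ) + 4 * (s : ℤ) - 2)
    (hwb : ∀ b : C, b ≠ p → b ≠ w → D w b = 10 * (L : ℤ))
    (hbb : ∀ a b : C, a ≠ p → a ≠ w → b ≠ p → b ≠ w → D a b = 0) :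
    SchulzeWinnerOn Set.univ D w ∧
      ∀ c : C, SchulzeWinnerOn Set.univ D c → c = w :=
  w_unique_schulze_winner_general p w s L hs hL hcard D hskew hpwD hbp hwb
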